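/- Let G be a group, P a submonoid of G, and for p ∈ P let L_p be the isometry of ℓ²(P) determined by L_p δ_q = δ_{pq}. Let α = (p₁, p₂, …, p_{2k}) be an even-length word of elements of P (k ≥ 1). If the constructible right ideal K(α) is empty, then L_{p₁}(L_{p₂})† L_{p₃}(L_{p₄})† ⋯ L_{p_{2k-1}}(L_{p_{2k}})† = 0 as an operator on ℓ²(P). -/

import Mathlib

/-- The iterated right quotient `\mathring{α} = p₁p₂⁻¹p₃p₄⁻¹⋯p_{2k-1}p_{2k}⁻¹` of the
even-length word `α = (p 1, p 2, …, p (2k))` (indices are `1`-based). -/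
def wordQuotient {G : Type*} [Group G] (p : ℕ → G) (k : ℕ) : G :=
  ((List.range k).map fun i => p (2 * i + 1) * (p (2 * i + 2))⁻¹).prod

/-- The element `g_j = p_{2k}p_{2k-1}⁻¹p_{2k-2}p_{2k-3}⁻¹⋯p_{2j+2}p_{2j+1}⁻¹p_{2j}`
(for `1 ≤ j ≤ k`), so that `g_k = p_{2k}`. -/
def wordG {G : Type*} [Group G] (p : ℕ → G) (k j : ℕ) : G :=
  ((List.range (k - j)).map fun i => p (2 * k - 2 * i) * (p (2 * k - 2 * i - 1))⁻¹).prod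
    * p (2 * j)

/-- The constructible right ideal `K(α) = ⋂_{j=1}^{k} g_j P` of the word
`α = (p 1, …, p (2k))`. -/
def wordK {G : Type*} [Group G] (P : Submonoid G) (p : ℕ → G) (k : ℕ) : Set G :=
  {x : G | ∀ j : ℕ, 1 ≤ j → j ≤ k → ∃ q ∈ P, x = wordG p k j * q}

/-- The operator `L_α = L_{p₁}(L_{p₂})† L_{p₃}(L_{p₄})† ⋯ L_{p_{2k-1}}(L_{p_{2k}})†` on
`ℓ²(P)` associated to the even-length word `α = (w 1, …, w (2k))` of elements of `P`. -/
noncomputable def wordOp {G : Type*} [Group G] (P : Submonoid G)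
    (L : P → (lp (fun _ : P => ℂ) 2 →L[ℂ] lp (fun _ : P => ℂ) 2)) (w : ℕ → P) (k : ℕ) :
    lp (fun _ : P => ℂ) 2 →L[ℂ] lp (fun _ : P => ℂ) 2 :=
  ((List.range k).map fun i =>
    L (w (2 * i + 1)) * ContinuousLinearMap.adjoint (L (w (2 * i + 2)))).prod

/-! Writing `L_α = L_{p₁}L_{p₂}^† ⋯ L_{p_{2k-1}}L_{p_{2k}}^†`, the adjoint `L_q^†` sends `δ_x` to
`δ_{q⁻¹x}` when `x ∈ qP` and to `0` otherwise, so the last factor `L_{p_{2k-1}}L_{p_{2k}}^†`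
either kills `δ_x` or turns it into `δ_{p_{2k-1}p_{2k}⁻¹x}`. Peeling off factors from the right,
`L_α δ_x ≠ 0` forces `x ∈ g_j P` for every `j`, i.e. `x ∈ K(α)`; so `K(α) = ∅` makes `L_α` vanish
on the canonical basis, hence everywhere. -/

namespace lp

variable {𝕜 : Type*} [RCLike 𝕜] {ι κ : Type*} [DecidableEq ι] [DecidableEq κ]

lemma single_eq_smul_single_one (p : ENNReal) (i : ι) (a : 𝕜) :
    lp.single p i a = a • lp.single (E := fun _ : ι => 𝕜) p i 1 := by
  rw [← lp.single_smul, smul_eq_mul, mul_one]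

lemma ext_single_one {p : ENNReal} [Fact (1 ≤ p)] (hp : p ≠ ⊤) {F : Type*} [AddCommMonoid F]
    [Module 𝕜 F] [TopologicalSpace F] [T2Space F] {S T : lp (fun _ : ι => 𝕜) p →L[𝕜] F}
    (h : ∀ i, S (lp.single p i 1) = T (lp.single p i 1)) : S = T :=
  ext_continuousLinearMap hp fun i => ContinuousLinearMap.ext fun a => by
    simp only [ContinuousLinearMap.comp_apply, singleContinuousLinearMap_apply]
    rw [single_eq_smul_single_one, map_smul, map_smul, h]

variable {T : lp (fun _ : ι => 𝕜) 2 →L[𝕜] lp (fun _ : κ => 𝕜) 2} {f : ι → κ}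

lemma adjoint_apply_of_apply_single (hT : ∀ i, T (lp.single 2 i 1) = lp.single 2 (f i) 1)
    (y : lp (fun _ : κ => 𝕜) 2) (i : ι) : T.adjoint y i = y (f i) := by
  simpa [lp.inner_single_left, ContinuousLinearMap.adjoint_inner_right, hT]
    using (lp.inner_single_left (𝕜 := 𝕜) i 1 (T.adjoint y)).symm

lemma adjoint_single_map_eq_single (hT : ∀ i, T (lp.single 2 i 1) = lp.single 2 (f i) 1)
    (hf : Function.Injective f) (i : ι) :
    T.adjoint (lp.single 2 (f i) 1) = lp.single 2 i 1 := by
  ext j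
  simp [adjoint_apply_of_apply_single hT, lp.single_apply, Pi.single_apply, hf.eq_iff]

lemma adjoint_single_eq_zero (hT : ∀ i, T (lp.single 2 i 1) = lp.single 2 (f i) 1)
    {c : κ} (hc : c ∉ Set.range f) : T.adjoint (lp.single 2 c 1) = 0 := by
  ext i
  simp [adjoint_apply_of_apply_single hT, lp.single_apply,
    show f i ≠ c from fun h => hc ⟨i, h⟩]

end lp

section Word

variable {G : Type*} [Group G]

lemma wordG_succ (p : ℕ → G) {k j : ℕ} (hjk : j ≤ k) :
    wordG p (k + 1) j = p (2 * k + 2) * (p (2 * k + 1))⁻¹ * wordG p k j := by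
  have e : ∀ i, 2 * (k + 1) - 2 * (i + 1) = 2 * k - 2 * i := fun i => by omega
  simp only [wordG, Nat.sub_add_comm hjk, List.range_succ_eq_map, List.map_cons,
    List.prod_cons, List.map_map, Function.comp_def, e, mul_zero, Nat.sub_zero, mul_assoc]
  rfl

lemma wordG_self (p : ℕ → G) (k : ℕ) : wordG p k k = p (2 * k) := by
  simp [wordG]

lemma mul_mem_wordK_succ (P : Submonoid G) {p : ℕ → G} {k : ℕ} {r : G} (hr : r ∈ P)
    (h : p (2 * k + 1) * r ∈ wordK P p k) : p (2 * k + 2) * r ∈ wordK P p (k + 1) := by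
  intro j hj1 hjk
  rcases Nat.lt_succ_iff_lt_or_eq.mp (Nat.lt_succ_of_le hjk) with hj | rfl
  · obtain ⟨s, hs, e⟩ := h j hj1 (by omega)
    refine ⟨s, hs, ?_⟩
    rw [wordG_succ p (by omega), mul_assoc, mul_assoc, ← e]
    group
  · exact ⟨r, hr, by rw [wordG_self]; rfl⟩

variable (P : Submonoid G) (L : P → (lp (fun _ : P => ℂ) 2 →L[ℂ] lp (fun _ : P => ℂ) 2))

lemma wordOp_succ (w : ℕ → P) (k : ℕ) :
    wordOp P L w (k + 1) =
      wordOp P L w k * (L (w (2 * k + 1)) * ContinuousLinearMap.adjoint (L (w (2 * k + 2)))) := by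
  simp [wordOp, List.range_succ]

lemma wordOp_apply_single_eq_zero [DecidableEq G]
    (hL : ∀ p q : P, L p (lp.single 2 q 1) = lp.single 2 (p * q) 1)
    (w : ℕ → P) {k : ℕ} {q : P} (hq : (q : G) ∉ wordK P (fun i => (w i : G)) k) :
    wordOp P L w k (lp.single 2 q 1) = 0 := by
  induction k generalizing q with
  | zero => exact absurd (fun j hj1 hj0 => by omega) hq
  | succ k ih =>
    rw [wordOp_succ, mul_apply_eq_comp, mul_apply_eq_comp]
    by_cases hr : q ∈ Set.range (w (2 * k + 2) * ·)
    · obtain ⟨r, rfl⟩ := hr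
      rw [lp.adjoint_single_map_eq_single (hL _) (mul_right_injective _), hL]
      exact ih fun h => hq (mul_mem_wordK_succ P r.2 h)
    · rw [lp.adjoint_single_eq_zero (hL _) hr, map_zero, map_zero]

end Word

theorem stmt_6_general {G : Type*} [Group G] [DecidableEq G] (P : Submonoid G)
    (L : P → (lp (fun _ : P => ℂ) 2 →L[ℂ] lp (fun _ : P => ℂ) 2))
    (hL : ∀ p q : P, L p (lp.single 2 q 1) = lp.single 2 (p * q) 1)
    (k : ℕ) (w : ℕ → P)
    (hempty : wordK P (fun i => (w i : G)) k = ∅) :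
    wordOp P L w k = 0 :=
  lp.ext_single_one ENNReal.ofNat_ne_top fun _ =>
    wordOp_apply_single_eq_zero P L hL w (hempty ▸ Set.notMem_empty _)

/-- Let `G` be a group, `P` a submonoid of `G`, and `L_p` the isometry of
`ℓ²(P)` determined by `L_p δ_q = δ_{pq}`.  Let `α = (w 1, …, w (2k))` be an even-length word
of elements of `P` (`k ≥ 1`).  If the constructible right ideal `K(α)` is empty, then
`L_{w 1}(L_{w 2})† ⋯ L_{w (2k-1)}(L_{w (2k)})† = 0` as an operator on `ℓ²(P)`. -/
theorem stmt_6 {G : Type*} [Group G] [DecidableEq G] (P : Submonoid G)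
    (L : P → (lp (fun _ : P => ℂ) 2 →L[ℂ] lp (fun _ : P => ℂ) 2))
    (hL : ∀ p q : P, L p (lp.single 2 q 1) = lp.single 2 (p * q) 1)
    (k : ℕ) (hk : 1 ≤ k) (w : ℕ → P)
    (hempty : wordK P (fun i => (w i : G)) k = ∅) :
    wordOp P L w k = 0 :=
  stmt_6_general P L hL k w hempty
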